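/- Let A be a complex n×n matrix and M = AA*. Then for every vector c ∈ ℂⁿ, (1/n)|∑_j c_j M_{j,j}|² ≤ ∑_{j,k} conj(c_j) c_k |M_{j,k}|². -/

import Mathlib

/-!
With `D = diagonal c` and `B = Aᴴ D A`, cyclicity of the trace gives `tr B = ∑ⱼ cⱼ Mⱼⱼ` and
`tr (Bᴴ B) = tr (D̄ M D M) = ∑ⱼₖ c̄ⱼ cₖ |Mⱼₖ|²`. The latter is the squared Frobenius norm of `B`,
which dominates `∑ᵤ |Bᵤᵤ|² ≥ |tr B|² / n` by Cauchy–Schwarz.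
-/

open Matrix

namespace Matrix

variable {𝕜 m n : Type*} [RCLike 𝕜] [Fintype m]

theorem re_trace_conjTranspose_mul_self [Fintype n] (B : Matrix m n 𝕜) :
    RCLike.re (Bᴴ * B).trace = ∑ i, ∑ j, ‖B i j‖ ^ 2 := by
  simp only [trace, diag, mul_apply, conjTranspose_apply, RCLike.star_def, RCLike.conj_mul,
    map_sum]
  rw [Finset.sum_comm]
  simp only [← RCLike.ofReal_pow, RCLike.ofReal_re]

theorem norm_trace_sq_div_card_le (B : Matrix m m 𝕜) :
    ‖B.trace‖ ^ 2 / Fintype.card m ≤ ∑ i, ∑ j, ‖B i j‖ ^ 2 := by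
  have hdiag : ‖B.trace‖ ^ 2 ≤ Fintype.card m * ∑ i, ‖B i i‖ ^ 2 :=
    calc ‖B.trace‖ ^ 2 ≤ (∑ i, ‖B i i‖) ^ 2 := by gcongr; exact norm_sum_le _ _
      _ ≤ Fintype.card m * ∑ i, ‖B i i‖ ^ 2 := sq_sum_le_card_mul_sum_sq
  have hoff : ∑ i, ‖B i i‖ ^ 2 ≤ ∑ i, ∑ j, ‖B i j‖ ^ 2 :=
    Finset.sum_le_sum fun i _ =>
      Finset.single_le_sum (f := fun j => ‖B i j‖ ^ 2) (fun j _ => by positivity)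
        (Finset.mem_univ i)
  refine div_le_of_le_mul₀ (Nat.cast_nonneg _) (by positivity) ?_
  rw [mul_comm]
  exact hdiag.trans (by gcongr)

theorem trace_diagonal_star_mul_mul_diagonal_mul_conjTranspose [DecidableEq m] (c : m → 𝕜)
    (M : Matrix m m 𝕜) :
    (diagonal (star c) * M * diagonal c * Mᴴ).trace =
      ∑ j, ∑ k, star (c j) * c k * (‖M j k‖ ^ 2 : 𝕜) := by
  simp only [trace, diag, mul_apply (N := Mᴴ), mul_diagonal, diagonal_mul, conjTranspose_apply,
    Pi.star_apply, RCLike.star_def, ← RCLike.mul_conj]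
  exact Finset.sum_congr rfl fun j _ => Finset.sum_congr rfl fun k _ => by ring

end Matrix

theorem schur_quadratic_form (n : ℕ) (A : Matrix (Fin n) (Fin n) ℂ) (c : Fin n → ℂ) :
    (1 / (n : ℝ)) * ‖∑ j, c j * (A * A.conjTranspose) j j‖ ^ 2 ≤
      (∑ j, ∑ k, (starRingEnd ℂ) (c j) * c k *
        (‖(A * A.conjTranspose) j k‖ ^ 2 : ℂ)).re := by
  obtain ⟨B, hB⟩ : ∃ B, B = Aᴴ * diagonal c * A := ⟨_, rfl⟩
  have htrace : B.trace = ∑ j, c j * (A * Aᴴ) j j := by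
    rw [hB, Matrix.mul_assoc, trace_mul_comm, Matrix.mul_assoc]
    simp only [trace, diag, diagonal_mul]
  have hquad :
      (Bᴴ * B).trace = (diagonal (star c) * (A * Aᴴ) * diagonal c * (A * Aᴴ)ᴴ).trace := by
    rw [(isHermitian_mul_conjTranspose_self A).eq, hB]
    simp only [conjTranspose_mul, conjTranspose_conjTranspose, diagonal_conjTranspose,
      Matrix.mul_assoc]
    rw [trace_mul_comm]
    simp only [Matrix.mul_assoc]
  calc (1 / (n : ℝ)) * ‖∑ j, c j * (A * Aᴴ) j j‖ ^ 2
      = ‖B.trace‖ ^ 2 / Fintype.card (Fin n) := by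
        rw [htrace, Fintype.card_fin, one_div_mul_eq_div]
    _ ≤ ∑ i, ∑ j, ‖B i j‖ ^ 2 := norm_trace_sq_div_card_le B
    _ = RCLike.re (Bᴴ * B).trace := (re_trace_conjTranspose_mul_self B).symm
    _ = _ := by
        rw [hquad, trace_diagonal_star_mul_mul_diagonal_mul_conjTranspose]
        rfl
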